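/- arXiv:2403.10163 — 2 statements merged into one kernel-verified Lean document; each statement's English description precedes it below -/
import Mathlib

section
/- Let l ≥ 4 and let H be a disjoint union of t ≥ 2 vertex-disjoint paths, with n_i(H) denoting the number of vertices of the i-th longest path of H (n_i(H)=0 if H has fewer than i components). Then the graph K_2 + H (the join of an edge with H) contains C_{l,l} as a subgraph if and only if n_1(H)+n_2(H) ≥ 2l−3, or (n_1(H)+n_2(H) ≤ 2l−4 and n_1(H) ≥ l−1 and n_2(H)+n_3(H) ≥ l−2). -/
open SimpleGraph

/-- The adjacency spectral radius of a finite simple graph. -/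
noncomputable def specRad {V : Type*} [Fintype V] [DecidableEq V] (G : SimpleGraph V) : ℝ :=
  letI := Classical.decRel G.Adj
  sSup ((fun μ : ℝ => |μ|) '' spectrum ℝ (G.adjMatrix ℝ))

/-- `G` contains a copy of `H` as a subgraph. -/
def Contains {V W : Type*} (G : SimpleGraph V) (H : SimpleGraph W) : Prop :=
  ∃ f : W ↪ V, ∀ a b, H.Adj a b → G.Adj (f a) (f b)

/-- `G` contains `C_{l,l}`: two cycles of length `l` sharing exactly one vertex. -/
def ContainsCll {V : Type*} (G : SimpleGraph V) (l : ℕ) : Prop :=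
  ∃ (u : V) (c₁ c₂ : G.Walk u u), c₁.IsCycle ∧ c₂.IsCycle ∧ c₁.length = l ∧ c₂.length = l ∧
    ∀ v, v ∈ c₁.support → v ∈ c₂.support → v = u

/-- Theta graph on `k` vertices: the cycle `0,1,…,k-1` plus a chord from `0` to `a`. -/
def thetaGraph (k a : ℕ) : SimpleGraph (Fin k) :=
  SimpleGraph.fromRel (fun i j =>
    (j : ℕ) = (i : ℕ) + 1 ∨ ((i : ℕ) = k - 1 ∧ (j : ℕ) = 0) ∨ ((i : ℕ) = 0 ∧ (j : ℕ) = a))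

/-- `G` contains some member of `Θ_k`, the set of Theta graphs on `k` vertices. -/
def ContainsTheta {V : Type*} (G : SimpleGraph V) (k : ℕ) : Prop :=
  ∃ a, 2 ≤ a ∧ a ≤ k - 2 ∧ Contains G (thetaGraph k a)

/-- The join of two graphs: all edges between the two vertex sets are added. -/
def joinG {V W : Type*} (G : SimpleGraph V) (H : SimpleGraph W) : SimpleGraph (V ⊕ W) where
  Adj a b := match a, b with
    | Sum.inl a, Sum.inl b => G.Adj a b
    | Sum.inr a, Sum.inr b => H.Adj a b
    | Sum.inl _, Sum.inr _ => True
    | Sum.inr _, Sum.inl _ => True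
  symm := by
    constructor
    rintro (a | a) (b | b) h
    · exact G.adj_symm h
    · trivial
    · trivial
    · exact H.adj_symm h
  loopless := by
    constructor
    rintro (a | a) h
    · exact G.loopless.irrefl a h
    · exact H.loopless.irrefl a h

/-- The disjoint union of `t` paths, the `i`-th having `f i` vertices. -/
def pathsUnion (t : ℕ) (f : ℕ → ℕ) : SimpleGraph (Σ i : Fin t, Fin (f i.1)) where
  Adj a b := a.1 = b.1 ∧ ((a.2 : ℕ) + 1 = (b.2 : ℕ) ∨ (b.2 : ℕ) + 1 = (a.2 : ℕ))
  symm := by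
    constructor
    rintro ⟨i, a⟩ ⟨j, b⟩ ⟨h₁, h₂⟩
    exact ⟨h₁.symm, h₂.symm⟩
  loopless := by
    constructor
    rintro ⟨i, a⟩ ⟨-, h⟩
    omega

/-- `H` is a minor of `G`: disjoint connected branch sets, one for each vertex of `H`,
with edges of `G` between branch sets corresponding to edges of `H`. -/
def IsMinor {V W : Type*} (H : SimpleGraph W) (G : SimpleGraph V) : Prop :=
  ∃ B : W → Set V, (∀ w, (B w).Nonempty) ∧ (∀ w, (G.induce (B w)).Connected) ∧
    (∀ w₁ w₂, w₁ ≠ w₂ → Disjoint (B w₁) (B w₂)) ∧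
    ∀ w₁ w₂, H.Adj w₁ w₂ → ∃ v₁ ∈ B w₁, ∃ v₂ ∈ B w₂, G.Adj v₁ v₂

/-- Planarity via Wagner's theorem: no `K₅` minor and no `K₃,₃` minor. -/
def IsPlanar {V : Type*} (G : SimpleGraph V) : Prop :=
  ¬ IsMinor (⊤ : SimpleGraph (Fin 5)) G ∧
  ¬ IsMinor (completeBipartiteGraph (Fin 3) (Fin 3)) G

/-!
A cycle of `K₂ + H` must pass through `K₂`, because `H` is a forest, and it meets at most as many
paths of `H` as it has vertices in `K₂`: every maximal run of the cycle inside `H` is entered from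
a vertex of `K₂`, and distinct runs are entered from distinct vertices.

If the two `l`-cycles of a `C_{l,l}` meet in a vertex of `H`, each of them has a single vertex of
`K₂`, so their `2l - 3` vertices in `H` lie on one path and `n₁ ≥ 2l - 3`. If they meet in a vertex
of `K₂`, one of them has `l - 1` vertices on one path of `H` and the other `l - 2` or `l - 1`
vertices on at most two paths; either only two paths are involved, giving `n₁ + n₂ ≥ 2l - 3`, or
three distinct ones, giving `n₁ ≥ l - 1` and `n₂ + n₃ ≥ l - 2`. Conversely, under these
inequalities the cycles `u', A, u'` and `u', B₁, u'', B₂, u'` can be laid out along disjoint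
segments `A`, `B₁`, `B₂` of the three longest paths.
-/

open Finset

namespace SimpleGraph.Walk

variable {V : Type*} {G : SimpleGraph V} {u : V}

lemma IsCycle.card_support_toFinset [DecidableEq V] {c : G.Walk u u} (hc : c.IsCycle) :
    #c.support.toFinset = c.length := by
  have hsupp : c.support.toFinset = c.support.tail.toFinset := by
    rw [← c.cons_tail_support, List.toFinset_cons, List.tail_cons,
      insert_eq_of_mem (List.mem_toFinset.mpr (c.end_mem_tail_support hc.not_nil))]
  rw [hsupp, List.toFinset_card_of_nodup hc.support_nodup, List.length_tail, length_support,
    Nat.add_sub_cancel]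

lemma exists_isCycle_of_isChain {L : List V} (hL : 2 ≤ L.length) (hnd : (u :: L).Nodup)
    (hch : (u :: (L ++ [u])).IsChain G.Adj) :
    ∃ c : G.Walk u u, c.IsCycle ∧ c.length = L.length + 1 ∧ c.support = u :: (L ++ [u]) := by
  let c : G.Walk u u :=
    (ofSupport _ (List.cons_ne_nil _ _) hch).copy (List.head_cons ..) (by simp)
  have hsupp : c.support = u :: (L ++ [u]) := by simp only [c, support_copy, support_ofSupport]
  have hlen : c.length = L.length + 1 := by
    simp only [c, length_copy, length_ofSupport, List.length_cons, List.length_append,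
      List.length_nil, Nat.add_sub_cancel]
  refine ⟨c, isCycle_iff_isPath_tail_and_le_length.mpr ⟨?_, by omega⟩, hlen, hsupp⟩
  rw [isPath_def, support_tail_of_not_nil _ (by simp [← length_eq_zero_iff, hlen]), hsupp]
  exact List.nodup_append_comm.mpr hnd

end SimpleGraph.Walk

section joinG

variable {α β ι : Type*} {K : SimpleGraph α} {H : SimpleGraph β}

@[simp] lemma joinG_adj_inl_inl {a b : α} : (joinG K H).Adj (.inl a) (.inl b) ↔ K.Adj a b :=
  Iff.rfl

@[simp] lemma joinG_adj_inl_inr (a : α) (y : β) : (joinG K H).Adj (.inl a) (.inr y) := trivial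

@[simp] lemma joinG_adj_inr_inl (x : β) (a : α) : (joinG K H).Adj (.inr x) (.inl a) := trivial

lemma exists_dart_inl_inr_of_mem_support {φ : β → ι} (hφ : ∀ x y, H.Adj x y → φ x = φ y)
    {v w : α ⊕ β} (p : (joinG K H).Walk v w) {x : β} (hx : .inr x ∈ p.support) :
    (∃ y, v = .inr y ∧ φ y = φ x) ∨
      ∃ d ∈ p.darts, ∃ a y, d.toProd = (.inl a, .inr y) ∧ φ y = φ x := by
  induction p with
  | nil =>
    rw [Walk.support_nil, List.mem_singleton] at hx
    exact .inl ⟨x, hx.symm, rfl⟩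
  | @cons v v' w hadj p ih =>
    rw [Walk.support_cons, List.mem_cons] at hx
    rcases hx with rfl | hx
    · exact .inl ⟨x, rfl, rfl⟩
    rcases ih hx with ⟨y, rfl, hy⟩ | ⟨d, hd, a, y, hdy, hy⟩
    · rcases v with a | z
      · exact .inr ⟨⟨(.inl a, .inr y), hadj⟩, by simp, a, y, rfl, hy⟩
      · exact .inl ⟨z, rfl, (hφ z y hadj).trans hy⟩
    · exact .inr ⟨d, by simp [hd], a, y, hdy, hy⟩

theorem card_image_toRight_le_card_toLeft [DecidableEq α] [DecidableEq β] [DecidableEq ι]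
    {φ : β → ι} (hφ : ∀ x y, H.Adj x y → φ x = φ y) {u : α ⊕ β} {c : (joinG K H).Walk u u}
    (hc : c.IsCycle) {a : α} (ha : .inl a ∈ c.support) :
    #(c.support.toFinset.toRight.image φ) ≤ #c.support.toFinset.toLeft := by
  let c' := c.rotate _ ha
  have hsupp : c'.support.toFinset = c.support.toFinset := by
    ext; simp [c', Walk.mem_support_rotate_iff]
  have hinj : ∀ d₁ ∈ c'.darts, ∀ d₂ ∈ c'.darts, d₁.fst = d₂.fst → d₁ = d₂ := fun _ h₁ _ h₂ =>
    List.inj_on_of_nodup_map (c'.map_fst_darts ▸ (hc.rotate ha).nodup_dropLast_support) h₁ h₂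
  rw [← hsupp]
  -- Started in `K`, the cycle enters each path it meets by a dart leaving `K`, and distinct darts
  -- of a cycle leave distinct vertices.
  refine card_le_card_of_forall_subsingleton
    (fun j b => ∃ d ∈ c'.darts, ∃ y, d.toProd = (.inl b, .inr y) ∧ φ y = j) ?_ ?_
  · intro j hj
    obtain ⟨x, hx, rfl⟩ := mem_image.mp hj
    rcases exists_dart_inl_inr_of_mem_support hφ c' (by simpa using hx) with
      ⟨y, hy, -⟩ | ⟨d, hd, b, y, hdy, hy⟩
    · exact absurd hy Sum.inl_ne_inr
    · have hb := c'.dart_fst_mem_support_of_mem_darts hd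
      rw [show d.fst = .inl b from congrArg Prod.fst hdy] at hb
      exact ⟨b, by simpa using hb, d, hd, y, hdy, hy⟩
  · rintro b - j₁ ⟨-, d₁, hd₁, y₁, hdy₁, rfl⟩ j₂ ⟨-, d₂, hd₂, y₂, hdy₂, rfl⟩
    rw [hinj d₁ hd₁ d₂ hd₂ (by rw [hdy₁, hdy₂]), hdy₂] at hdy₁
    obtain rfl : y₂ = y₁ := by simpa using hdy₁
    rfl

lemma isChain_inl_map_inr_inl {a b : α} {R : List β} (hR : R.IsChain H.Adj)
    (hab : R ≠ [] ∨ K.Adj a b) :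
    (.inl a :: (R.map .inr ++ [.inl b])).IsChain (joinG K H).Adj := by
  cases R with
  | nil => simpa using hab.resolve_left (not_not_intro rfl)
  | cons x R =>
    rw [List.map_cons, List.cons_append, List.isChain_cons_cons]
    refine ⟨joinG_adj_inl_inr a x, ?_⟩
    rw [← List.cons_append, ← List.map_cons, List.isChain_append]
    refine ⟨(List.isChain_map _).mpr hR, List.isChain_singleton _, fun v hv _ hw => ?_⟩
    obtain ⟨y, -, rfl⟩ := List.mem_map.mp (List.mem_of_mem_getLast? hv)
    obtain rfl : _ = Sum.inl b := Option.some_inj.mp hw.symm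
    exact joinG_adj_inr_inl y b

theorem containsCll_joinG_of_isChain {a b : α} (hab : K.Adj a b) {A B₁ B₂ : List β} {l : ℕ}
    (hA : A.IsChain H.Adj) (hB₁ : B₁.IsChain H.Adj) (hB₂ : B₂.IsChain H.Adj)
    (hnd : (A ++ B₁ ++ B₂).Nodup) (hAl : A.length + 1 = l) (hBl : B₁.length + B₂.length + 2 = l)
    (hl : 3 ≤ l) : ContainsCll (joinG K H) l := by
  simp only [List.nodup_append, List.mem_append] at hnd
  have hlen₂ : (B₁.map Sum.inr ++ Sum.inl b :: B₂.map Sum.inr).length + 1 = l := by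
    simp only [List.length_append, List.length_map, List.length_cons]
    omega
  obtain ⟨c₁, hc₁, hlen₁, hsupp₁⟩ := Walk.exists_isCycle_of_isChain (u := .inl a)
    (L := A.map Sum.inr) (by rw [List.length_map]; omega)
    (by simp [List.nodup_map_iff Sum.inr_injective, hnd])
    (isChain_inl_map_inr_inl hA (.inl (List.ne_nil_of_length_pos (by omega))))
  obtain ⟨c₂, hc₂, hlen₂', hsupp₂⟩ := Walk.exists_isCycle_of_isChain (u := .inl a)
    (L := B₁.map Sum.inr ++ Sum.inl b :: B₂.map Sum.inr) (by omega)
    (by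
      simp only [List.nodup_cons, List.nodup_append, List.nodup_map_iff Sum.inr_injective,
        List.mem_append, List.mem_cons, List.mem_map]
      grind [hab.ne])
    (by
      rw [List.append_assoc, List.cons_append, List.isChain_cons_split]
      exact ⟨isChain_inl_map_inr_inl hB₁ (.inr hab), isChain_inl_map_inr_inl hB₂ (.inr hab.symm)⟩)
  refine ⟨.inl a, c₁, c₂, hc₁, hc₂, by rw [hlen₁, List.length_map, hAl],
    hlen₂'.trans hlen₂, ?_⟩
  intro v hv₁ hv₂
  rw [hsupp₁] at hv₁
  rw [hsupp₂] at hv₂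
  simp only [List.mem_cons, List.mem_append, List.mem_map, List.not_mem_nil, or_false] at hv₁ hv₂
  grind

end joinG

theorem Antitone.sum_le_sum_range {M : Type*} [AddCommMonoid M] [PartialOrder M]
    [IsOrderedAddMonoid M] {f : ℕ → M} (hf : Antitone f) {T : Finset ℕ} {m : ℕ}
    (hT : ∀ i ∈ T, m ≤ i) : ∑ i ∈ T, f i ≤ ∑ i ∈ range #T, f (m + i) := by
  induction T using Finset.induction_on_max with
  | empty => simp
  | insert a s hlt ih =>
    have has : a ∉ s := fun h => lt_irrefl a (hlt a h)
    have hcard : #s ≤ a - m := by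
      simpa using card_le_card fun i hi => mem_Ico.mpr ⟨hT i (mem_insert_of_mem hi), hlt i hi⟩
    rw [sum_insert has, card_insert_of_notMem has, sum_range_succ, add_comm]
    have hma := hT a (mem_insert_self a s)
    exact add_le_add (ih fun i hi => hT i (mem_insert_of_mem hi)) (hf (by omega))

namespace pathsUnion

variable {t : ℕ} {f : ℕ → ℕ}

def index (x : Σ i : Fin t, Fin (f i.1)) : ℕ := x.1

lemma index_eq_of_adj {x y : Σ i : Fin t, Fin (f i.1)} (h : (pathsUnion t f).Adj x y) :
    index x = index y :=
  congrArg Fin.val h.1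

lemma eq_of_adj_of_lt {x y z : Σ i : Fin t, Fin (f i.1)}
    (hy : (pathsUnion t f).Adj x y) (hz : (pathsUnion t f).Adj x z)
    (hyx : (y.2 : ℕ) < x.2) (hzx : (z.2 : ℕ) < x.2) : y = z := by
  obtain ⟨i, k⟩ := x
  obtain ⟨j, m⟩ := y
  obtain ⟨j', m'⟩ := z
  obtain ⟨rfl : i = j, hm⟩ := hy
  obtain ⟨rfl : i = j', hm'⟩ := hz
  simp only at hm hm' hyx hzx
  rw [Fin.ext_iff.mpr (show (m : ℕ) = m' by omega)]

lemma card_le_sum_image_index (S : Finset (Σ i : Fin t, Fin (f i.1))) :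
    #S ≤ ∑ i ∈ S.image index, f i := by
  calc #S ≤ #((S.image Sigma.fst).sigma fun _ => univ) :=
        card_le_card fun x hx => mem_sigma.mpr ⟨mem_image_of_mem _ hx, mem_univ _⟩
    _ = ∑ i ∈ S.image Sigma.fst, f i := by simp [card_sigma]
    _ = ∑ i ∈ S.image index, f i := by
        have himage : S.image index = (S.image Sigma.fst).image Fin.val := by
          rw [image_image]; rfl
        rw [himage, sum_image fun _ _ _ _ h => Fin.ext h]

lemma card_le_sum_range (hf : Antitone f) {S : Finset (Σ i : Fin t, Fin (f i.1))} {m k : ℕ}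
    (hS : ∀ x ∈ S, m ≤ index x) (hk : #(S.image index) ≤ k) :
    #S ≤ ∑ i ∈ range k, f (m + i) :=
  calc #S ≤ ∑ i ∈ S.image index, f i := card_le_sum_image_index S
    _ ≤ ∑ i ∈ range #(S.image index), f (m + i) := hf.sum_le_sum_range fun i hi => by
        obtain ⟨x, hx, rfl⟩ := mem_image.mp hi
        exact hS x hx
    _ ≤ ∑ i ∈ range k, f (m + i) := sum_le_sum_of_subset (range_subset_range.mpr hk)

lemma card_le_of_forall_index_eq (hf : Antitone f) {S : Finset (Σ i : Fin t, Fin (f i.1))}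
    {j : ℕ} (hS : ∀ x ∈ S, index x = j) : #S ≤ f j := by
  have hk : #(S.image index) ≤ 1 := card_le_one.mpr fun a ha b hb => by
    obtain ⟨x, hx, rfl⟩ := mem_image.mp ha
    obtain ⟨y, hy, rfl⟩ := mem_image.mp hb
    rw [hS x hx, hS y hy]
  simpa using card_le_sum_range hf (fun x hx => (hS x hx).ge) hk

lemma card_add_card_le (hf : Antitone f) {A B : Finset (Σ i : Fin t, Fin (f i.1))}
    (hAB : Disjoint A B) (hA : #(A.image index) ≤ 1) (hB : #(B.image index) ≤ 2)
    (hBA : #B ≤ #A) : #A + #B ≤ f 0 + f 1 ∨ (#A ≤ f 0 ∧ #B ≤ f 1 + f 2) := by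
  by_cases hmeet : Disjoint (A.image index) (B.image index)
  · right
    obtain rfl | ⟨x, hx⟩ := A.eq_empty_or_nonempty
    · simp_all
    have hAx : ∀ y ∈ A, index y = index x := fun y hy =>
      card_le_one.mp hA _ (mem_image_of_mem _ hy) _ (mem_image_of_mem _ hx)
    have hA' : #A ≤ f (index x) := card_le_of_forall_index_eq hf hAx
    refine ⟨hA'.trans (hf (Nat.zero_le _)), ?_⟩
    obtain h0 | hpos := Nat.eq_zero_or_pos (index x)
    · have hB1 : ∀ y ∈ B, 1 ≤ index y := fun y hy => Nat.one_le_iff_ne_zero.mpr fun hy0 =>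
        disjoint_left.mp hmeet (mem_image_of_mem _ hx) (h0.trans hy0.symm ▸ mem_image_of_mem _ hy)
      simpa [sum_range_succ] using card_le_sum_range hf hB1 hB
    · have : f (index x) ≤ f 1 := hf hpos
      omega
  · left
    have hunion : #((A ∪ B).image index) ≤ 2 := by
      rw [image_union, ← Nat.add_le_add_iff_right, card_union_add_card_inter]
      have := (not_disjoint_iff_nonempty_inter.mp hmeet).card_pos
      omega
    simpa [card_union_of_disjoint hAB, sum_range_succ] using
      card_le_sum_range hf (m := 0) (fun _ _ => Nat.zero_le _) hunion

def segment (i : Fin t) (o n : ℕ) (h : o + n ≤ f i) : List (Σ i : Fin t, Fin (f i.1)) :=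
  List.ofFn fun k : Fin n => ⟨i, o + k, by omega⟩

section segment

variable {i : Fin t} {o n : ℕ} {h : o + n ≤ f i}

@[simp] lemma length_segment : (segment i o n h).length = n := List.length_ofFn

lemma isChain_segment : (segment i o n h).IsChain (pathsUnion t f).Adj :=
  List.isChain_ofFn.mpr fun _ _ => ⟨rfl, .inl (Nat.add_assoc _ _ _)⟩

lemma nodup_segment : (segment i o n h).Nodup :=
  List.nodup_ofFn.mpr fun k k' hk => Fin.ext (by simpa using congrArg (fun x => (x.2 : ℕ)) hk)

lemma mem_segment {x : Σ i : Fin t, Fin (f i.1)} (hx : x ∈ segment i o n h) :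
    x.1 = i ∧ o ≤ x.2 ∧ x.2 < o + n := by
  obtain ⟨k, rfl⟩ := List.mem_ofFn.mp hx
  simp

end segment

section hubs

variable {α : Type*} {K : SimpleGraph α}

lemma exists_inl_mem_support_of_isCycle {u : α ⊕ Σ i : Fin t, Fin (f i.1)}
    {c : (joinG K (pathsUnion t f)).Walk u u} (hc : c.IsCycle) : ∃ a, .inl a ∈ c.support := by
  classical
  by_contra! hno
  -- A vertex of largest position on a cycle avoiding `K` would have two distinct neighbours on
  -- the cycle, both one step lower on the same path.
  obtain ⟨v, hv, hmax⟩ := c.support.toFinset.exists_max_image (Sum.elim 0 fun x => (x.2 : ℕ))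
    ⟨u, by simp⟩
  rw [List.mem_toFinset] at hv
  obtain ⟨x, rfl⟩ : ∃ x, v = .inr x := by
    cases v with
    | inl a => exact absurd hv (hno a)
    | inr x => exact ⟨x, rfl⟩
  let c' := c.rotate _ hv
  have hc' : c'.IsCycle := hc.rotate hv
  have lower_neighbor : ∀ w ∈ c'.support, (joinG K (pathsUnion t f)).Adj (.inr x) w →
      ∃ y, w = .inr y ∧ (pathsUnion t f).Adj x y ∧ (y.2 : ℕ) < x.2 := by
    intro w hw hadj
    rw [Walk.mem_support_rotate_iff] at hw
    cases w with
    | inl a => exact absurd hw (hno a)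
    | inr y =>
      have hle := hmax _ (List.mem_toFinset.mpr hw)
      have hstep := hadj.2
      simp only [Sum.elim_inr] at hle
      exact ⟨y, rfl, hadj, by omega⟩
  obtain ⟨y, hy, hxy, hyx⟩ := lower_neighbor _ (c'.getVert_mem_support 1) (c'.adj_snd hc'.not_nil)
  obtain ⟨z, hz, hxz, hzx⟩ := lower_neighbor _ (c'.getVert_mem_support _)
    (c'.adj_penultimate hc'.not_nil).symm
  exact hc'.snd_ne_penultimate <|
    hy.trans <| (congrArg _ (eq_of_adj_of_lt hxy hxz hyx hzx)).trans hz.symm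

lemma card_image_index_le [DecidableEq α] {u : α ⊕ Σ i : Fin t, Fin (f i.1)}
    {c : (joinG K (pathsUnion t f)).Walk u u} (hc : c.IsCycle) :
    #(c.support.toFinset.toRight.image index) ≤ #c.support.toFinset.toLeft :=
  have ⟨_, ha⟩ := exists_inl_mem_support_of_isCycle hc
  card_image_toRight_le_card_toLeft (fun _ _ => index_eq_of_adj) hc ha

lemma card_toLeft_pos [DecidableEq α] {u : α ⊕ Σ i : Fin t, Fin (f i.1)}
    {c : (joinG K (pathsUnion t f)).Walk u u} (hc : c.IsCycle) :
    0 < #c.support.toFinset.toLeft :=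
  have ⟨a, ha⟩ := exists_inl_mem_support_of_isCycle hc
  card_pos.mpr ⟨a, by simpa using ha⟩

theorem containsCll_of_segments {l : ℕ} {a b : α} (hab : K.Adj a b) {i j k : Fin t}
    {o n₁ n₂ : ℕ} (hi : l - 1 ≤ f i) (hj : o + n₁ ≤ f j) (hk : n₂ ≤ f k)
    (hij : j ≠ i ∨ l - 1 ≤ o) (hik : k ≠ i) (hjk : k ≠ j) (hn : n₁ + n₂ + 2 = l) (hl : 3 ≤ l) :
    ContainsCll (joinG K (pathsUnion t f)) l := by
  refine containsCll_joinG_of_isChain hab (A := segment i 0 (l - 1) (by omega))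
    (B₁ := segment j o n₁ hj) (B₂ := segment k 0 n₂ (by omega)) isChain_segment
    isChain_segment isChain_segment ?_ (by rw [length_segment]; omega)
    (by rw [length_segment, length_segment, hn]) hl
  refine List.nodup_append.mpr ⟨List.nodup_append.mpr ⟨nodup_segment, nodup_segment, ?_⟩,
    nodup_segment, ?_⟩
  · rintro x hx _ hy rfl
    have := mem_segment hx
    have := mem_segment hy
    grind
  · rintro x hx _ hy rfl
    have := mem_segment hy
    rcases List.mem_append.mp hx with hx | hx <;> have := mem_segment hx <;> grind

end hubs

section twoHubs

variable {l : ℕ} {K : SimpleGraph (Fin 2)}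

lemma le_of_cycles_sharing_inr (hf : Antitone f) {w : Σ i : Fin t, Fin (f i.1)}
    {c₁ c₂ : (joinG K (pathsUnion t f)).Walk (.inr w) (.inr w)} (hc₁ : c₁.IsCycle)
    (hc₂ : c₂.IsCycle) (hl₁ : c₁.length = l) (hl₂ : c₂.length = l)
    (hshare : ∀ v, v ∈ c₁.support → v ∈ c₂.support → v = .inr w) : 2 * l - 3 ≤ f 0 := by
  have hcard₁ := card_toLeft_add_card_toRight.trans hc₁.card_support_toFinset
  have hcard₂ := card_toLeft_add_card_toRight.trans hc₂.card_support_toFinset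
  have himage₁ := card_image_index_le hc₁
  have himage₂ := card_image_index_le hc₂
  have hpos₁ := card_toLeft_pos hc₁
  have hpos₂ := card_toLeft_pos hc₂
  set s₁ := c₁.support.toFinset
  set s₂ := c₂.support.toFinset
  have hY : #s₁.toLeft + #s₂.toLeft ≤ 2 := by
    rw [← card_union_of_disjoint (disjoint_left.mpr fun a h₁ h₂ => Sum.inl_ne_inr <|
      hshare _ (by simpa [s₁] using h₁) (by simpa [s₂] using h₂))]
    exact card_le_univ _
  have hX : s₁.toRight ∩ s₂.toRight = {w} := by
    ext x
    simp only [mem_inter, mem_toRight, List.mem_toFinset, mem_singleton, s₁, s₂]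
    exact ⟨fun h => Sum.inr_injective (hshare _ h.1 h.2),
      by rintro rfl; exact ⟨c₁.start_mem_support, c₂.start_mem_support⟩⟩
  have hindex : ∀ x ∈ s₁.toRight ∪ s₂.toRight, index x = index w := by
    have hw₁ : w ∈ s₁.toRight := by simp [s₁]
    have hw₂ : w ∈ s₂.toRight := by simp [s₂]
    rintro x hx
    rcases mem_union.mp hx with hx | hx
    · exact card_le_one.mp (by omega) _ (mem_image_of_mem _ hx) _ (mem_image_of_mem _ hw₁)
    · exact card_le_one.mp (by omega) _ (mem_image_of_mem _ hx) _ (mem_image_of_mem _ hw₂)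
  have hunion := card_le_of_forall_index_eq hf hindex
  have hinter := card_union_add_card_inter s₁.toRight s₂.toRight
  rw [hX, card_singleton] at hinter
  have : f (index w) ≤ f 0 := hf (Nat.zero_le _)
  omega

lemma le_of_cycles_sharing_inl (hf : Antitone f) {a : Fin 2}
    {c₁ c₂ : (joinG K (pathsUnion t f)).Walk (.inl a) (.inl a)} (hc₁ : c₁.IsCycle)
    (hc₂ : c₂.IsCycle) (hl₁ : c₁.length = l) (hl₂ : c₂.length = l)
    (hshare : ∀ v, v ∈ c₁.support → v ∈ c₂.support → v = .inl a) :
    2 * l - 3 ≤ f 0 + f 1 ∨ (l - 1 ≤ f 0 ∧ l - 2 ≤ f 1 + f 2) := by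
  have hcard₁ := card_toLeft_add_card_toRight.trans hc₁.card_support_toFinset
  have hcard₂ := card_toLeft_add_card_toRight.trans hc₂.card_support_toFinset
  have himage₁ := card_image_index_le hc₁
  have himage₂ := card_image_index_le hc₂
  have hpos₁ := card_toLeft_pos hc₁
  have hpos₂ := card_toLeft_pos hc₂
  set s₁ := c₁.support.toFinset
  set s₂ := c₂.support.toFinset
  have hY : #s₁.toLeft + #s₂.toLeft ≤ 3 := by
    have hinter : s₁.toLeft ∩ s₂.toLeft ⊆ {a} := fun b hb => by
      simp only [mem_inter, mem_toLeft, List.mem_toFinset, s₁, s₂] at hb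
      exact mem_singleton.mpr (Sum.inl_injective (hshare _ hb.1 hb.2))
    have hinter' := card_le_card hinter
    have hunion : #(s₁.toLeft ∪ s₂.toLeft) ≤ 2 := card_le_univ _
    rw [card_singleton] at hinter'
    rw [← card_union_add_card_inter]
    omega
  have hX : Disjoint s₁.toRight s₂.toRight := disjoint_left.mpr fun x h₁ h₂ => Sum.inr_ne_inl <|
    hshare _ (by simpa [s₁] using h₁) (by simpa [s₂] using h₂)
  by_cases h₁ : #s₁.toLeft = 1
  · rcases card_add_card_le hf hX (by omega) (by omega) (by omega) with h | h <;> omega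
  · rcases card_add_card_le hf hX.symm (by omega) (by omega) (by omega) with h | h <;> omega

theorem le_of_containsCll (hf : Antitone f) (h : ContainsCll (joinG K (pathsUnion t f)) l) :
    2 * l - 3 ≤ f 0 + f 1 ∨ (l - 1 ≤ f 0 ∧ l - 2 ≤ f 1 + f 2) := by
  obtain ⟨u, c₁, c₂, hc₁, hc₂, hl₁, hl₂, hshare⟩ := h
  cases u with
  | inl a => exact le_of_cycles_sharing_inl hf hc₁ hc₂ hl₁ hl₂ hshare
  | inr w => exact .inl <| (le_of_cycles_sharing_inr hf hc₁ hc₂ hl₁ hl₂ hshare).trans <|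
      Nat.le_add_right _ _

theorem containsCll_of_le (hl : 3 ≤ l) (ht : 2 ≤ t) (hf : Antitone f)
    (hft : ∀ i, 1 ≤ f i ↔ i < t)
    (h : 2 * l - 3 ≤ f 0 + f 1 ∨ (l - 1 ≤ f 0 ∧ l - 2 ≤ f 1 + f 2)) :
    ContainsCll (joinG (⊤ : SimpleGraph (Fin 2)) (pathsUnion t f)) l := by
  have hf₁₀ : f 1 ≤ f 0 := hf zero_le_one
  have hab : (⊤ : SimpleGraph (Fin 2)).Adj 0 1 := by simp
  by_cases h₀₁ : 2 * l - 3 ≤ f 0 + f 1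
  · -- `B₁` is what is left of the longest path after `A`, and `B₂` comes from the second one.
    obtain ⟨m, hm⟩ : ∃ m, m = min (f 0 - (l - 1)) (l - 2) := ⟨_, rfl⟩
    exact containsCll_of_segments hab (i := ⟨0, by omega⟩) (j := ⟨0, by omega⟩)
      (k := ⟨1, ht⟩) (o := l - 1) (n₁ := m) (n₂ := l - 2 - m) (by omega : l - 1 ≤ f 0)
      (by omega : l - 1 + m ≤ f 0) (by omega : l - 2 - m ≤ f 1) (.inr le_rfl) (by simp) (by simp)
      (by omega) hl
  · obtain ⟨h₀, h₁₂⟩ := h.resolve_left h₀₁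
    have ht₂ : 2 < t := (hft 2).mp (by omega)
    exact containsCll_of_segments hab (i := ⟨0, by omega⟩) (j := ⟨1, ht⟩) (k := ⟨2, ht₂⟩)
      (o := 0) (n₁ := f 1) (n₂ := l - 2 - f 1) h₀ (zero_add _).le (by omega : l - 2 - f 1 ≤ f 2)
      (.inl (by simp)) (by simp) (by simp) (by omega) hl

end twoHubs

end pathsUnion

theorem stmt6 (l t : ℕ) (hl : 4 ≤ l) (ht : 2 ≤ t) (f : ℕ → ℕ) (hf : Antitone f)
    (hft : ∀ i, 1 ≤ f i ↔ i < t) :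
    ContainsCll (joinG (⊤ : SimpleGraph (Fin 2)) (pathsUnion t f)) l ↔
      (2 * l - 3 ≤ f 0 + f 1 ∨
        (f 0 + f 1 ≤ 2 * l - 4 ∧ l - 1 ≤ f 0 ∧ l - 2 ≤ f 1 + f 2)) := by
  have key : ContainsCll (joinG (⊤ : SimpleGraph (Fin 2)) (pathsUnion t f)) l ↔
      2 * l - 3 ≤ f 0 + f 1 ∨ (l - 1 ≤ f 0 ∧ l - 2 ≤ f 1 + f 2) :=
    ⟨pathsUnion.le_of_containsCll hf, pathsUnion.containsCll_of_le (by omega) ht hf hft⟩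
  rw [key]
  omega
end

section
/- Let k ≥ 5 and let G be a planar graph on vertex set {u₁, u₂} ∪ B with every vertex of B adjacent to both u₁ and u₂, such that G contains no Theta graph on k vertices. If G[B] is a disjoint union of paths with longest path of order n₁, then n₁ ≤ k−4. -/
open SimpleGraph

/-! If `w₁ … w_{k-3}` is a path in `G[B]`, choose `x ∈ B` off the path, which `|B| ≥ k - 2`
allows. Then `u₁ w₁ … w_{k-3} u₂ x u₁` is a cycle on `k` vertices and `u₁ w₂` is a chord of it,
so `G` contains a Theta graph on `k` vertices. -/

theorem contains_thetaGraph_of_isChain {V : Type*} {G : SimpleGraph V} {u : V} {l : List V}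
    {a : ℕ} (hnd : (u :: l).Nodup) (hchain : (u :: l).IsChain G.Adj)
    (hclose : G.Adj ((u :: l).getLast (List.cons_ne_nil u l)) u) (ha : a < l.length + 1)
    (hchord : G.Adj u (u :: l)[a]) :
    Contains G (thetaGraph (l.length + 1) a) := by
  refine ⟨⟨(u :: l).get, List.nodup_iff_injective_get.mp hnd⟩, ?_⟩
  have hstep : ∀ i j : Fin (l.length + 1), (j : ℕ) = i + 1 →
      G.Adj ((u :: l).get i) ((u :: l).get j) := by
    rintro i ⟨j, hj⟩ rfl
    exact List.isChain_iff_getElem.mp hchain i hj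
  have hwrap : ∀ i j : Fin (l.length + 1), (i : ℕ) = l.length + 1 - 1 → (j : ℕ) = 0 →
      G.Adj ((u :: l).get i) ((u :: l).get j) := by
    rintro ⟨i, hi⟩ ⟨j, hj⟩ rfl rfl
    simpa [List.getLast_eq_getElem] using hclose
  have hch : ∀ i j : Fin (l.length + 1), (i : ℕ) = 0 → (j : ℕ) = a →
      G.Adj ((u :: l).get i) ((u :: l).get j) := by
    rintro ⟨i, hi⟩ ⟨j, hj⟩ rfl rfl
    exact hchord
  intro i j hij
  rw [thetaGraph, fromRel_adj] at hij
  rcases hij.2 with (h | ⟨h₁, h₂⟩ | ⟨h₁, h₂⟩) | (h | ⟨h₁, h₂⟩ | ⟨h₁, h₂⟩)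
  · exact hstep i j h
  · exact hwrap i j h₁ h₂
  · exact hch i j h₁ h₂
  · exact (hstep j i h).symm
  · exact (hwrap j i h₁ h₂).symm
  · exact (hch j i h₁ h₂).symm

theorem containsTheta_of_path_of_commonNeighbors {V : Type*} {G : SimpleGraph V} {m : ℕ}
    (hm : 2 ≤ m) (p : Fin m ↪ V) (hp : ∀ i j, (pathGraph m).Adj i j → G.Adj (p i) (p j))
    {u₁ u₂ x : V} (hu : u₁ ≠ u₂) (hxu₁ : x ≠ u₁) (hxu₂ : x ≠ u₂)
    (hpu₁ : ∀ i, p i ≠ u₁) (hpu₂ : ∀ i, p i ≠ u₂) (hpx : ∀ i, p i ≠ x)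
    (hu₁p : ∀ i, G.Adj u₁ (p i)) (hu₂p : ∀ i, G.Adj u₂ (p i))
    (hu₁x : G.Adj u₁ x) (hu₂x : G.Adj u₂ x) :
    ContainsTheta G (m + 3) := by
  have hlen : (List.ofFn p ++ [u₂, x]).length + 1 = m + 3 := by simp
  have hpath : (List.ofFn p).IsChain G.Adj :=
    List.isChain_ofFn.mpr fun i hi => hp _ _ (by simp [pathGraph_adj])
  refine ⟨2, le_rfl, by omega,
    hlen ▸ contains_thetaGraph_of_isChain (u := u₁) ?_ ?_ ?_ (by simp) ?_⟩
  · simpa [List.nodup_append, List.nodup_ofFn, p.injective] using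
      ⟨⟨hpu₁, hu, hxu₁.symm⟩, hxu₂.symm, fun i => ⟨hpu₂ i, hpx i⟩⟩
  · simp only [List.isChain_cons, List.isChain_append]
    refine ⟨?_, hpath, by simpa using hu₂x, ?_⟩
    · obtain ⟨n, rfl⟩ : ∃ n, m = n + 1 := ⟨m - 1, by omega⟩
      simp [List.ofFn_succ, hu₁p]
    · rintro y hy z hz
      obtain ⟨i, rfl⟩ := List.mem_ofFn.mp (List.mem_of_getLast? hy)
      obtain rfl : z = u₂ := by simpa using hz.symm
      exact (hu₂p i).symm
  · simpa using hu₁x.symm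
  · rw [List.getElem_cons_succ, List.getElem_append_left (by simp; omega), List.getElem_ofFn]
    exact hu₁p _

theorem stmt13_general (k : ℕ) (hk : 5 ≤ k) {B : Type*} [Fintype B]
    (G : SimpleGraph (Fin 2 ⊕ B))
    (hcard : k - 2 ≤ Fintype.card B)
    (hspan : ∀ (i : Fin 2) (v : B), G.Adj (Sum.inl i) (Sum.inr v))
    (hfree : ¬ ContainsTheta G k) :
    ¬ Contains (G.induce (Set.range Sum.inr)) (SimpleGraph.pathGraph (k - 3)) := by
  classical
  rintro ⟨f, hf⟩
  obtain ⟨⟨_, x, rfl⟩, hxf⟩ : ∃ y, y ∉ Set.range f := by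
    by_contra! hsurj
    have := Fintype.card_le_of_surjective f hsurj
    rw [Fintype.card_fin, Set.card_range_of_injective Sum.inr_injective] at this
    omega
  have hne : ∀ {v : Fin 2 ⊕ B}, v ∈ Set.range Sum.inr → ∀ i, v ≠ Sum.inl i := by
    rintro _ ⟨b, rfl⟩ i
    simp
  have hadj : ∀ i {v : Fin 2 ⊕ B}, v ∈ Set.range Sum.inr → G.Adj (Sum.inl i) v := by
    rintro i _ ⟨b, rfl⟩
    exact hspan i b
  let p := f.trans (Function.Embedding.subtype _)
  have hp : ∀ i, p i ∈ Set.range Sum.inr := fun i => (f i).2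
  have hθ := containsTheta_of_path_of_commonNeighbors (by omega) p hf (by simp)
    Sum.inr_ne_inl Sum.inr_ne_inl (fun i => hne (hp i) 0) (fun i => hne (hp i) 1)
    (fun i h => hxf ⟨i, Subtype.ext h⟩) (fun i => hadj 0 (hp i)) (fun i => hadj 1 (hp i))
    (hspan 0 x) (hspan 1 x)
  exact hfree (by rwa [show k - 3 + 3 = k by omega] at hθ)

theorem stmt13 (k : ℕ) (hk : 5 ≤ k) {B : Type*} [Fintype B]
    (G : SimpleGraph (Fin 2 ⊕ B)) (hpl : IsPlanar G)
    (hcard : k - 2 ≤ Fintype.card B)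
    (hspan : ∀ (i : Fin 2) (v : B), G.Adj (Sum.inl i) (Sum.inr v))
    (hfree : ¬ ContainsTheta G k)
    (hacyc : (G.induce (Set.range Sum.inr)).IsAcyclic)
    (hdeg : ∀ v : B, {w : B | G.Adj (Sum.inr v) (Sum.inr w)}.ncard ≤ 2) :
    ¬ Contains (G.induce (Set.range Sum.inr)) (SimpleGraph.pathGraph (k - 3)) :=
  stmt13_general k hk G hcard hspan hfree
end
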